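/- Let a multispindle X act on M with weights summing so that the compound action of X on M vanishes (Σ_k a_k (m⊳_k x) = 0 for all m, x). Then the late degenerate submodule CL(M;X) (spanned by m⊗(x_n,…,x_0) with x_i = x_{i-1} for some i < n) is a subcomplex of CD(M;X), and the map s(m⊗(x_n,…,x_0)) = (-1)^n m⊗(x_n,x_n,x_{n-1},…,x_0) defines an isomorphism of chain complexes CN(M;X)[1] ≅ CD(M;X)/CL(M;X). -/

import Mathlib

def face {X : Type*} (op : X → X → X) {n : ℕ} (i : Fin (n+1)) (f : Fin (n+1) → X) :
    Fin n → X :=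
  fun k => if (k : ℕ) < (i : ℕ) then f k.castSucc else op (f k.succ) (f i)

noncomputable def moduleFace {X : Type} (R : Type) [CommRing R] {M : Type}
    [AddCommGroup M] [Module R M] (op : X → X → X) (β : X → M →ₗ[R] M)
    {n : ℕ} (i : Fin (n+1)) :
    ((Fin (n+1) → X) →₀ M) →ₗ[R] ((Fin n → X) →₀ M) :=
  Finsupp.lsum R fun f => (Finsupp.lsingle (face op i f)).comp (β (f i))

noncomputable def moduleDiff {X : Type} (R : Type) [CommRing R] {M : Type}
    [AddCommGroup M] [Module R M] {r : ℕ} (ops : Fin r → X → X → X)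
    (act : Fin r → X → M →ₗ[R] M) (a : Fin r → R) (m : ℕ) :
    ((Fin (m+1) → X) →₀ M) →ₗ[R] ((Fin m → X) →₀ M) :=
  ∑ k, a k • ∑ i : Fin (m+1),
    ((-1 : R) ^ (m - (i : ℕ))) • moduleFace R (ops k) (act k) i

/-- The degenerate submodule `CD_n(M;X)`. -/
noncomputable def degenSub (X R : Type) [CommRing R] (M : Type) [AddCommGroup M] [Module R M]
    (n : ℕ) : Submodule R ((Fin (n+1) → X) →₀ M) :=
  Submodule.span R {g | ∃ (f : Fin (n+1) → X) (m : M),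
    g = Finsupp.single f m ∧ ∃ i : Fin n, f i.castSucc = f i.succ}

/-- The late degenerate submodule `CL_n(M;X)`, spanned by `m ⊗ (x_n,…,x_0)` with
`x_i = x_{i-1}` for some `i < n`, i.e. with a repetition not involving the leftmost entry. -/
noncomputable def lateDegenSub (X R : Type) [CommRing R] (M : Type) [AddCommGroup M] [Module R M]
    (n : ℕ) : Submodule R ((Fin (n+1) → X) →₀ M) :=
  Submodule.span R {g | ∃ (f : Fin (n+1) → X) (m : M),
    g = Finsupp.single f m ∧ ∃ i : Fin n, (i : ℕ) + 1 < n ∧ f i.castSucc = f i.succ}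

/-- The doubling map `s(m ⊗ (x_n,…,x_0)) = (-1)^n m ⊗ (x_n,x_n,x_{n-1},…,x_0)`. -/
noncomputable def doubling (X R : Type) [CommRing R] (M : Type) [AddCommGroup M] [Module R M]
    (n : ℕ) : ((Fin (n+1) → X) →₀ M) →ₗ[R] ((Fin (n+2) → X) →₀ M) :=
  Finsupp.lsum R fun f =>
    ((-1 : R) ^ n) • (Finsupp.lsingle (Fin.snoc f (f (Fin.last n))) : M →ₗ[R] _)

/-! Since the compound action vanishes, the compound top face `∑ₖ aₖ d_n^{⊳ₖ}` is zero, so the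
differential is the alternating sum of the lower compound faces alone. On a tuple with a late
repetition `x_i = x_{i+1}` the faces at `i` and `i+1` agree by idempotency and cancel, while every
other lower face keeps a late repetition: `CL` is a subcomplex. Up to sign, the lower faces commute with
doubling the leftmost entry, and on a doubled tuple the face removing the second copy returns the
original tuple acted on by `x_n`, which again vanishes in the compound; so `s` is an honest chain
map. A degenerate tuple either has a late repetition or is `(x_n, x_n, …)`, i.e. is a doubled
tuple, and a doubled tuple has a late repetition exactly when the original one is degenerate. -/

open Finsupp

section Tuples

variable {X : Type} {n : ℕ}

/-- `f (Fin.last n)` is the leftmost entry `x_n`, so this is `(x_n, x_n, x_{n-1}, …, x_0)`. -/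
def repeatLast (f : Fin (n+1) → X) : Fin (n+2) → X :=
  Fin.snoc f (f (Fin.last n))

@[simp]
lemma repeatLast_castSucc (f : Fin (n+1) → X) (i : Fin (n+1)) : repeatLast f i.castSucc = f i :=
  Fin.snoc_castSucc ..

@[simp]
lemma repeatLast_last (f : Fin (n+1) → X) : repeatLast f (Fin.last (n+1)) = f (Fin.last n) :=
  Fin.snoc_last ..

lemma repeatLast_injective : Function.Injective (repeatLast (X := X) (n := n)) := fun _ _ h =>
  funext fun k => by simpa using congrFun h k.castSucc

lemma repeatLast_init {f : Fin (n+2) → X} (hf : f (Fin.last n).castSucc = f (Fin.last (n+1))) :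
    repeatLast (Fin.init f) = f := by
  rw [repeatLast, Fin.init, hf]
  exact Fin.snoc_init_self f

variable (X) in
def degenerateTuples (n : ℕ) : Set (Fin (n+1) → X) :=
  {f | ∃ i : Fin n, f i.castSucc = f i.succ}

variable (X) in
def lateDegenerateTuples (n : ℕ) : Set (Fin (n+1) → X) :=
  {f | ∃ i : Fin n, (i : ℕ) + 1 < n ∧ f i.castSucc = f i.succ}

lemma repeatLast_mem_degenerateTuples (f : Fin (n+1) → X) :
    repeatLast f ∈ degenerateTuples X (n+1) :=
  ⟨Fin.last n, by simp [Fin.succ_last]⟩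

lemma mem_degenerateTuples_of_repeatLast_mem {f : Fin (n+1) → X}
    (hf : repeatLast f ∈ lateDegenerateTuples X (n+1)) : f ∈ degenerateTuples X n := by
  obtain ⟨i, hi, heq⟩ := hf
  have hsucc : i.succ = Fin.castSucc ⟨i + 1, hi⟩ := rfl
  rw [hsucc, repeatLast_castSucc, repeatLast_castSucc] at heq
  exact ⟨⟨i, by omega⟩, heq⟩

end Tuples

section Faces

variable {X : Type} (op : X → X → X) {n : ℕ}

lemma face_last (f : Fin (n+1) → X) : face op (Fin.last n) f = Fin.init f :=
  funext fun k => if_pos k.is_lt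

lemma face_castSucc_eq_face_succ (hidem : ∀ x, op x x = x) {f : Fin (n+2) → X} {i : Fin (n+1)}
    (hf : f i.castSucc = f i.succ) : face op i.castSucc f = face op i.succ f := by
  funext k
  simp only [face, Fin.val_castSucc, Fin.val_succ]
  rcases lt_trichotomy (k : ℕ) i with h | h | h
  · rw [if_pos h, if_pos (by omega)]
  · obtain rfl : k = i := Fin.ext h
    rw [if_neg (lt_irrefl _), if_pos (Nat.lt_succ_self _), hf, hidem]
  · rw [if_neg (by omega), if_neg (by omega), hf]

lemma face_mem_lateDegenerateTuples {f : Fin (n+2) → X} {i : Fin (n+1)} (hi : (i : ℕ) + 1 < n + 1)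
    (hf : f i.castSucc = f i.succ) {j : Fin (n+2)} (hj₁ : j ≠ i.castSucc) (hj₂ : j ≠ i.succ)
    (hj₃ : j ≠ Fin.last (n+1)) :
    face op j f ∈ lateDegenerateTuples X n := by
  have hj₁ : (j : ℕ) ≠ i := fun h => hj₁ (Fin.ext h)
  have hj₂ : (j : ℕ) ≠ i + 1 := fun h => hj₂ (Fin.ext h)
  have hj₃ : (j : ℕ) ≠ n + 1 := fun h => hj₃ (Fin.ext h)
  have hjn := j.is_lt
  rcases Nat.lt_or_gt_of_ne hj₁ with h | h
  · -- both entries of the repetition are acted on by `x_j` and move down by one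
    refine ⟨⟨i - 1, by omega⟩, by simp only; omega, ?_⟩
    simp only [face, Fin.val_castSucc, Fin.val_succ]
    rw [if_neg (by omega), if_neg (by omega)]
    convert congrArg (op · (f j)) hf using 3 <;> ext <;> simp <;> omega
  · refine ⟨⟨i, by omega⟩, by simp only; omega, ?_⟩
    simp only [face, Fin.val_castSucc, Fin.val_succ]
    rw [if_pos (by omega), if_pos (by omega)]
    exact hf

lemma face_castSucc_castSucc_repeatLast (j : Fin (n+1)) (f : Fin (n+2) → X) :
    face op j.castSucc.castSucc (repeatLast f) = repeatLast (face op j.castSucc f) := by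
  funext k
  refine Fin.lastCases ?_ (fun k => ?_) k
  · have hj := j.is_lt
    simp [face, show ¬ n < (j : ℕ) by omega, show ¬ n + 1 < (j : ℕ) by omega]
  · simp [face, -Fin.castSucc_succ, Fin.succ_castSucc]

lemma face_castSucc_last_repeatLast (hidem : ∀ x, op x x = x) (f : Fin (n+2) → X) :
    face op (Fin.last (n+1)).castSucc (repeatLast f) = f := by
  funext k
  refine Fin.lastCases ?_ (fun k => ?_) k
  · simp [face, hidem]
  · simp [face, k.is_lt]

end Faces

section Submodules

variable {X R M : Type} [CommRing R] [AddCommGroup M] [Module R M]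

lemma span_single_eq_supported {α : Type*} (s : Set α) :
    Submodule.span R {g : α →₀ M | ∃ a m, g = single a m ∧ a ∈ s} = supported M R s := by
  refine le_antisymm (Submodule.span_le.mpr ?_) fun g hg => ?_
  · rintro _ ⟨a, m, rfl, ha⟩
    exact single_mem_supported R m ha
  · rw [← g.sum_single]
    exact Submodule.sum_mem _ fun a ha => Submodule.subset_span ⟨a, g a, rfl, hg ha⟩

variable (X) in
lemma degenSub_eq_supported (n : ℕ) :
    degenSub X R M n = supported M R (degenerateTuples X n) :=
  span_single_eq_supported _

variable (X) in
lemma lateDegenSub_eq_supported (n : ℕ) :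
    lateDegenSub X R M n = supported M R (lateDegenerateTuples X n) :=
  span_single_eq_supported _

variable (X) in
lemma doubling_eq_smul_lmapDomain (n : ℕ) :
    doubling X R M n = ((-1 : R) ^ n) • lmapDomain M R (repeatLast (n := n)) :=
  lhom_ext fun f m => by simp [doubling, repeatLast]

lemma doubling_single {n : ℕ} (f : Fin (n+1) → X) (m : M) :
    doubling X R M n (single f m) = ((-1 : R) ^ n) • single (repeatLast f) m := by
  simp [doubling_eq_smul_lmapDomain]

lemma doubling_apply_repeatLast {n : ℕ} (g : (Fin (n+1) → X) →₀ M) (f : Fin (n+1) → X) :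
    doubling X R M n g (repeatLast f) = ((-1 : R) ^ n) • g f := by
  simp [doubling_eq_smul_lmapDomain, mapDomain_apply repeatLast_injective]

end Submodules

section CompoundFace

variable {X R M : Type} [CommRing R] [AddCommGroup M] [Module R M] {r : ℕ}
  (ops : Fin r → X → X → X) (act : Fin r → X → M →ₗ[R] M) (a : Fin r → R)

@[simp]
lemma moduleFace_single (op : X → X → X) (β : X → M →ₗ[R] M) {n : ℕ} (i : Fin (n+1))
    (f : Fin (n+1) → X) (m : M) :
    moduleFace R op β i (single f m) = single (face op i f) (β (f i) m) := by
  simp [moduleFace]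

noncomputable def compoundFace {n : ℕ} (i : Fin (n+1)) :
    ((Fin (n+1) → X) →₀ M) →ₗ[R] ((Fin n → X) →₀ M) :=
  ∑ k, a k • moduleFace R (ops k) (act k) i

lemma moduleDiff_eq_sum_compoundFace (n : ℕ) :
    moduleDiff R ops act a n
      = ∑ i : Fin (n+1), ((-1 : R) ^ (n - i)) • compoundFace ops act a i := by
  simp only [moduleDiff, compoundFace, Finset.smul_sum, smul_comm (a _)]
  exact Finset.sum_comm

variable {ops act a}

lemma compoundFace_castSucc_single_eq_succ (hidem : ∀ (k : Fin r) (x : X), ops k x x = x)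
    {n : ℕ} {f : Fin (n+2) → X} {i : Fin (n+1)} (hf : f i.castSucc = f i.succ) (m : M) :
    compoundFace ops act a i.castSucc (single f m) = compoundFace ops act a i.succ (single f m) := by
  simp [compoundFace, face_castSucc_eq_face_succ _ (hidem _) hf, hf]

variable (ops) in
lemma compoundFace_last_eq_zero (hvanish : ∀ (m : M) (x : X), ∑ k, a k • act k x m = 0)
    (n : ℕ) : compoundFace ops act a (Fin.last n) = 0 :=
  lhom_ext fun f m => by
    simp [compoundFace, face_last, ← single_finsetSum, hvanish]

variable (ops) in
lemma moduleDiff_eq_sum_compoundFace_castSucc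
    (hvanish : ∀ (m : M) (x : X), ∑ k, a k • act k x m = 0) (n : ℕ) :
    moduleDiff R ops act a n
      = ∑ i : Fin n, ((-1 : R) ^ (n - i)) • compoundFace ops act a i.castSucc := by
  rw [moduleDiff_eq_sum_compoundFace, Fin.sum_univ_castSucc,
    compoundFace_last_eq_zero ops hvanish, smul_zero, add_zero]
  rfl

end CompoundFace

lemma sum_mem_of_add_mem_of_forall_ne {G S ι : Type*} [AddCommMonoid G] [SetLike S G]
    [AddSubmonoidClass S G] [Fintype ι] [DecidableEq ι] {L : S} {T : ι → G} {p q : ι}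
    (hpq : p ≠ q) (hpair : T p + T q ∈ L) (hrest : ∀ j, j ≠ p → j ≠ q → T j ∈ L) :
    ∑ j, T j ∈ L := by
  rw [← Finset.sum_add_sum_compl {p, q}, Finset.sum_pair hpq]
  refine add_mem hpair (sum_mem fun j hj => ?_)
  simp only [Finset.mem_compl, Finset.mem_insert, Finset.mem_singleton, not_or] at hj
  exact hrest j hj.1 hj.2

section Differential

variable {X R M : Type} [CommRing R] [AddCommGroup M] [Module R M] {r : ℕ}
  {ops : Fin r → X → X → X} {act : Fin r → X → M →ₗ[R] M} {a : Fin r → R} {n : ℕ}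

lemma moduleDiff_single_mem_lateDegenSub (hidem : ∀ (k : Fin r) (x : X), ops k x x = x)
    (hvanish : ∀ (m : M) (x : X), ∑ k, a k • act k x m = 0)
    {f : Fin (n+2) → X} (hf : f ∈ lateDegenerateTuples X (n+1)) (m : M) :
    moduleDiff R ops act a (n+1) (single f m) ∈ lateDegenSub X R M n := by
  obtain ⟨i, hi, hfi⟩ := hf
  rw [moduleDiff_eq_sum_compoundFace, LinearMap.coe_sum, Finset.sum_apply]
  refine sum_mem_of_add_mem_of_forall_ne (Fin.castSucc_lt_succ (i := i)).ne ?_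
    fun j hj₁ hj₂ => ?_
  · have hsign : (-1 : R) ^ (n + 1 - i.castSucc) = -(-1) ^ (n + 1 - i.succ) := by
      rw [Fin.val_castSucc, Fin.val_succ, show n + 1 - i = n + 1 - (i + 1) + 1 by omega, pow_succ,
        mul_neg_one]
    simp only [LinearMap.smul_apply, compoundFace_castSucc_single_eq_succ hidem hfi, hsign,
      neg_smul, neg_add_cancel, zero_mem]
  by_cases hj₃ : j = Fin.last (n+1)
  · simp [hj₃, compoundFace_last_eq_zero ops hvanish]
  · refine Submodule.smul_mem _ _ ?_
    simp only [compoundFace, LinearMap.coe_sum, Finset.sum_apply, LinearMap.smul_apply,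
      moduleFace_single]
    exact sum_mem fun k _ => Submodule.smul_mem _ _ <| Submodule.subset_span
      ⟨_, _, rfl, face_mem_lateDegenerateTuples (ops k) hi hfi hj₁ hj₂ hj₃⟩

theorem map_moduleDiff_lateDegenSub_le (hidem : ∀ (k : Fin r) (x : X), ops k x x = x)
    (hvanish : ∀ (m : M) (x : X), ∑ k, a k • act k x m = 0) :
    (lateDegenSub X R M (n+1)).map (moduleDiff R ops act a (n+1)) ≤ lateDegenSub X R M n := by
  rw [Submodule.map_le_iff_le_comap]
  refine Submodule.span_le.mpr ?_
  rintro _ ⟨f, m, rfl, hf⟩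
  exact moduleDiff_single_mem_lateDegenSub hidem hvanish hf m

lemma compoundFace_castSucc_castSucc_doubling (j : Fin (n+1)) (g : (Fin (n+2) → X) →₀ M) :
    compoundFace ops act a j.castSucc.castSucc (doubling X R M (n+1) g)
      = -doubling X R M n (compoundFace ops act a j.castSucc g) := by
  induction g using Finsupp.induction_linear with
  | zero => simp
  | add g₁ g₂ h₁ h₂ => rw [map_add, map_add, h₁, h₂, map_add, map_add, neg_add]
  | single f m =>
    simp [compoundFace, doubling_single, face_castSucc_castSucc_repeatLast, pow_succ,
      smul_comm (a _)]

lemma compoundFace_castSucc_last_doubling (hidem : ∀ (k : Fin r) (x : X), ops k x x = x)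
    (hvanish : ∀ (m : M) (x : X), ∑ k, a k • act k x m = 0) (g : (Fin (n+2) → X) →₀ M) :
    compoundFace ops act a (Fin.last (n+1)).castSucc (doubling X R M (n+1) g) = 0 := by
  induction g using Finsupp.induction_linear with
  | zero => simp
  | add g₁ g₂ h₁ h₂ => rw [map_add, map_add, h₁, h₂, add_zero]
  | single f m =>
    simp [compoundFace, doubling_single, face_castSucc_last_repeatLast _ (hidem _),
      ← single_finsetSum, smul_comm (a _), ← Finset.smul_sum, hvanish]

theorem doubling_moduleDiff (hidem : ∀ (k : Fin r) (x : X), ops k x x = x)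
    (hvanish : ∀ (m : M) (x : X), ∑ k, a k • act k x m = 0) (g : (Fin (n+2) → X) →₀ M) :
    doubling X R M n (moduleDiff R ops act a (n+1) g)
      = moduleDiff R ops act a (n+2) (doubling X R M (n+1) g) := by
  rw [moduleDiff_eq_sum_compoundFace_castSucc ops hvanish,
    moduleDiff_eq_sum_compoundFace_castSucc ops hvanish]
  conv_rhs => rw [Fin.sum_univ_castSucc]
  simp only [LinearMap.add_apply, LinearMap.coe_sum, Finset.sum_apply, LinearMap.smul_apply,
    map_sum, map_smul, compoundFace_castSucc_castSucc_doubling,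
    compoundFace_castSucc_last_doubling hidem hvanish, smul_zero, add_zero]
  refine Finset.sum_congr rfl fun j _ => ?_
  rw [Fin.val_castSucc, show n + 2 - j = n + 1 - j + 1 by omega, pow_succ, mul_neg_one, neg_smul,
    smul_neg, neg_neg]

end Differential

section Doubling

variable {X R M : Type} [CommRing R] [AddCommGroup M] [Module R M] {n : ℕ}

lemma doubling_mem_degenSub (g : (Fin (n+1) → X) →₀ M) :
    doubling X R M n g ∈ degenSub X R M (n+1) := by
  classical
  rw [doubling_eq_smul_lmapDomain, LinearMap.smul_apply, degenSub_eq_supported]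
  refine Submodule.smul_mem _ _ ((mem_supported _ _).mpr ?_)
  refine (Finset.coe_subset.mpr mapDomain_support).trans fun _ h => ?_
  obtain ⟨f, -, rfl⟩ := Finset.mem_image.mp h
  exact repeatLast_mem_degenerateTuples f

variable (X R M) in
lemma degenSub_le_lateDegenSub_sup_range_doubling :
    degenSub X R M (n+1) ≤ lateDegenSub X R M (n+1) ⊔ LinearMap.range (doubling X R M n) := by
  refine Submodule.span_le.mpr ?_
  rintro _ ⟨f, m, rfl, i, hfi⟩
  by_cases hi : (i : ℕ) + 1 < n + 1
  · exact Submodule.mem_sup_left (Submodule.subset_span ⟨f, m, rfl, i, hi, hfi⟩)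
  · obtain rfl : i = Fin.last n := Fin.ext (by simp; omega)
    rw [Fin.succ_last] at hfi
    refine Submodule.mem_sup_right ⟨single (Fin.init f) ((-1 : R) ^ n • m), ?_⟩
    rw [doubling_single, repeatLast_init hfi, smul_single, smul_smul, ← mul_pow, neg_one_mul,
      neg_neg, one_pow, one_smul]

lemma mem_degenSub_of_doubling_mem_lateDegenSub {g : (Fin (n+1) → X) →₀ M}
    (hg : doubling X R M n g ∈ lateDegenSub X R M (n+1)) : g ∈ degenSub X R M n := by
  rw [lateDegenSub_eq_supported, mem_supported] at hg
  rw [degenSub_eq_supported, mem_supported]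
  intro f hf
  refine mem_degenerateTuples_of_repeatLast_mem (hg ?_)
  rw [Finset.mem_coe, mem_support_iff, doubling_apply_repeatLast, Ne,
    (isUnit_neg_one.pow n).smul_eq_zero]
  exact mem_support_iff.mp hf

end Doubling

theorem late_degenerate_and_doubling_general
    {X : Type} (R : Type) [CommRing R] (M : Type) [AddCommGroup M] [Module R M]
    {r : ℕ} (ops : Fin r → X → X → X)
    (hidem : ∀ (k : Fin r) (x : X), ops k x x = x)
    (act : Fin r → X → (M →ₗ[R] M))
    (a : Fin r → R)
    (hvanish : ∀ (m : M) (x : X), ∑ k, a k • act k x m = 0) :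
    (∀ n : ℕ, Submodule.map (moduleDiff R ops act a (n+1)) (lateDegenSub X R M (n+1))
        ≤ lateDegenSub X R M n)
    ∧ (∀ (n : ℕ) (g : (Fin (n+1) → X) →₀ M), doubling X R M n g ∈ degenSub X R M (n+1))
    ∧ (∀ (n : ℕ) (g : (Fin (n+2) → X) →₀ M),
        doubling X R M n (moduleDiff R ops act a (n+1) g)
          - moduleDiff R ops act a (n+2) (doubling X R M (n+1) g)
          ∈ lateDegenSub X R M (n+1))
    ∧ (∀ (n : ℕ) (c : (Fin (n+2) → X) →₀ M), c ∈ degenSub X R M (n+1) →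
        ∃ g : (Fin (n+1) → X) →₀ M, c - doubling X R M n g ∈ lateDegenSub X R M (n+1))
    ∧ (∀ (n : ℕ) (g : (Fin (n+1) → X) →₀ M),
        doubling X R M n g ∈ lateDegenSub X R M (n+1) → g ∈ degenSub X R M n) := by
  refine ⟨fun _ => map_moduleDiff_lateDegenSub_le hidem hvanish,
    fun _ => doubling_mem_degenSub, fun n g => ?_, fun n c hc => ?_,
    fun _ _ => mem_degenSub_of_doubling_mem_lateDegenSub⟩
  · rw [doubling_moduleDiff hidem hvanish, sub_self]
    exact zero_mem _
  · obtain ⟨y, hy, _, ⟨g, rfl⟩, rfl⟩ :=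
      Submodule.mem_sup.mp (degenSub_le_lateDegenSub_sup_range_doubling X R M hc)
    exact ⟨g, by rwa [add_sub_cancel_right]⟩

/-- If the compound action of the multispindle `X` on `M` vanishes, then `CL(M;X)` is a
subcomplex of `CD(M;X)` and `s(m⊗(x_n,…,x_0)) = (-1)^n m⊗(x_n,x_n,…,x_0)` induces an
isomorphism of chain complexes `CN(M;X)[1] ≅ CD(M;X)/CL(M;X)`: `s` lands in `CD`, is a
chain map modulo `CL`, and the induced map `C/CD → CD/CL` is bijective. -/
theorem late_degenerate_and_doubling
    {X : Type} (R : Type) [CommRing R] (M : Type) [AddCommGroup M] [Module R M]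
    {r : ℕ} (ops : Fin r → X → X → X)
    (hidem : ∀ (k : Fin r) (x : X), ops k x x = x)
    (hdistr : ∀ (i j : Fin r) (x y z : X),
      ops j (ops i x y) z = ops i (ops j x z) (ops j y z))
    (act : Fin r → X → (M →ₗ[R] M))
    (hact : ∀ (i j : Fin r) (x y : X) (m : M),
      act j y (act i x m) = act i (ops j x y) (act j y m))
    (a : Fin r → R)
    (hvanish : ∀ (m : M) (x : X), ∑ k, a k • act k x m = 0) :
    (∀ n : ℕ, Submodule.map (moduleDiff R ops act a (n+1)) (lateDegenSub X R M (n+1))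
        ≤ lateDegenSub X R M n)
    ∧ (∀ (n : ℕ) (g : (Fin (n+1) → X) →₀ M), doubling X R M n g ∈ degenSub X R M (n+1))
    ∧ (∀ (n : ℕ) (g : (Fin (n+2) → X) →₀ M),
        doubling X R M n (moduleDiff R ops act a (n+1) g)
          - moduleDiff R ops act a (n+2) (doubling X R M (n+1) g)
          ∈ lateDegenSub X R M (n+1))
    ∧ (∀ (n : ℕ) (c : (Fin (n+2) → X) →₀ M), c ∈ degenSub X R M (n+1) →
        ∃ g : (Fin (n+1) → X) →₀ M, c - doubling X R M n g ∈ lateDegenSub X R M (n+1))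
    ∧ (∀ (n : ℕ) (g : (Fin (n+1) → X) →₀ M),
        doubling X R M n g ∈ lateDegenSub X R M (n+1) → g ∈ degenSub X R M n) :=
  late_degenerate_and_doubling_general R M ops hidem act a hvanish
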